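/- arXiv:math/0109054 — 2 statements merged into one kernel-verified Lean document; each statement's English description precedes it below -/
import Mathlib

section
/- Let Z(x,y) = x + i·exp(-y⁻²) for (x,y) ∈ (-1,1) × (0,1), and let f(x,y) = Z(x,y)^{-1/4} using the branch of z ↦ z^{1/4} that is positive on the positive real axis (well-defined since Im Z > 0). Then ∫_{-1}^{1} |f(x,y)| dx ≤ C uniformly in y ∈ (0,1), and yet |f(0,y)| = exp(y⁻²/4), so f is not of tempered growth as y → 0⁺. -/
/-!
Since `|x| = |Re Z| ≤ |Z|` and the exponent is negative, `|f(x,y)| ≤ |x|^(-1/4)`, a bound that is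
integrable on `[-1,1]` and independent of `y`. At `x = 0`, however, `|f(0,y)| = |Z(0,y)|^(-1/4)`
with `|Z(0,y)| = exp(-y⁻²)`, which beats every power of `y` as `y → 0⁺`.
-/

open Real Filter MeasureTheory

lemma intervalIntegrable_abs_rpow {r : ℝ} (hr : -1 < r) (a b : ℝ) :
    IntervalIntegrable (fun x : ℝ => |x| ^ r) volume a b := by
  simpa [Complex.norm_cpow_real] using
    (intervalIntegral.intervalIntegrable_cpow' (r := r) (by simpa using hr) (a := a) (b := b)).norm

lemma norm_cpow_le_abs_re_rpow {z : ℂ} (hz : z.re ≠ 0) {s : ℝ} (hs : s ≤ 0) :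
    ‖z ^ (s : ℂ)‖ ≤ |z.re| ^ s := by
  rw [Complex.norm_cpow_real]
  exact rpow_le_rpow_of_nonpos (abs_pos.2 hz) (Complex.abs_re_le_norm z) hs

lemma norm_cpow_add_I_mul_le {x : ℝ} (hx : x ≠ 0) (E : ℝ) {s : ℝ} (hs : s ≤ 0) :
    ‖((x : ℂ) + Complex.I * E) ^ (s : ℂ)‖ ≤ |x| ^ s := by
  simpa using norm_cpow_le_abs_re_rpow (z := x + Complex.I * E) (by simpa using hx) hs

lemma intervalIntegrable_norm_cpow_add_I_mul {s : ℝ} (hs₁ : -1 < s) (hs₀ : s ≤ 0) (E a b : ℝ) :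
    IntervalIntegrable (fun x : ℝ => ‖((x : ℂ) + Complex.I * E) ^ (s : ℂ)‖) volume a b := by
  refine (intervalIntegrable_abs_rpow hs₁ a b).mono_fun'
    (by fun_prop : Measurable _).aestronglyMeasurable ?_
  filter_upwards [ae_restrict_of_ae (volume.ae_ne 0)] with x hx
  rw [norm_norm]
  exact norm_cpow_add_I_mul_le hx E hs₀

lemma integral_norm_cpow_add_I_mul_le {s : ℝ} (hs₁ : -1 < s) (hs₀ : s ≤ 0) (E : ℝ) {a b : ℝ}
    (hab : a ≤ b) :
    ∫ x in a..b, ‖((x : ℂ) + Complex.I * E) ^ (s : ℂ)‖ ≤ ∫ x in a..b, |x| ^ s := by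
  refine intervalIntegral.integral_mono_ae hab
    (intervalIntegrable_norm_cpow_add_I_mul hs₁ hs₀ E a b) (intervalIntegrable_abs_rpow hs₁ a b) ?_
  filter_upwards [volume.ae_ne 0] with x hx
  exact norm_cpow_add_I_mul_le hx E hs₀

lemma exists_mul_rpow_neg_lt_exp_inv_sq (s C : ℝ) :
    ∃ y ∈ Set.Ioo (0 : ℝ) 1, C * y ^ (-s) < exp (y⁻¹ ^ 2 / 4) := by
  obtain ⟨t, hCt, ht⟩ :=
    (((tendsto_exp_mul_div_rpow_atTop s (1 / 4) (by norm_num)).eventually_gt_atTop C).and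
      (eventually_gt_atTop 1)).exists
  have ht₀ : 0 < t := by linarith
  refine ⟨t⁻¹, ⟨inv_pos.2 ht₀, inv_lt_one_of_one_lt₀ ht⟩, ?_⟩
  rw [inv_inv, inv_rpow ht₀.le, rpow_neg ht₀.le, inv_inv]
  calc C * t ^ s < exp (1 / 4 * t) := (lt_div_iff₀ (rpow_pos_of_pos ht₀ s)).1 hCt
    _ ≤ exp (t ^ 2 / 4) := exp_le_exp.2 (by nlinarith)

/-- For `Z(x,y) = x + i·exp(-y⁻²)` on `(-1,1) × (0,1)` and
`f(x,y) = Z(x,y)^(-1/4)` (principal branch, positive on the positive real axis), the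
integrals `∫_{-1}^1 |f(x,y)| dx` are bounded uniformly in `y ∈ (0,1)`, yet
`|f(0,y)| = exp(y⁻²/4)`, so `f` is not of tempered growth as `y → 0⁺`. -/
theorem example_one_one
    (Z : ℝ → ℝ → ℂ) (hZ : ∀ x y, Z x y = (x : ℂ) + Complex.I * Real.exp (-(y⁻¹ ^ 2)))
    (f : ℝ → ℝ → ℂ) (hf : ∀ x y, f x y = Z x y ^ (-(1/4) : ℂ)) :
    (∃ C : ℝ, ∀ y ∈ Set.Ioo (0:ℝ) 1, (∫ x in (-1:ℝ)..1, ‖f x y‖) ≤ C) ∧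
    (∀ y ∈ Set.Ioo (0:ℝ) 1, ‖f 0 y‖ = Real.exp (y⁻¹ ^ 2 / 4)) ∧
    (∀ (N : ℕ) (C : ℝ), ∃ y ∈ Set.Ioo (0:ℝ) 1, C * y ^ (-(N:ℝ)) < ‖f 0 y‖) := by
  have hf' : ∀ x y, f x y =
      ((x : ℂ) + Complex.I * (exp (-(y⁻¹ ^ 2)) : ℝ)) ^ ((-(1 / 4) : ℝ) : ℂ) := by
    intro x y
    rw [hf, hZ]
    push_cast
    rfl
  have hf₀ : ∀ y, ‖f 0 y‖ = exp (y⁻¹ ^ 2 / 4) := by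
    intro y
    rw [hf', Complex.norm_cpow_real, Complex.ofReal_zero, zero_add, norm_mul, Complex.norm_I,
      one_mul, Complex.norm_real, norm_of_nonneg (exp_pos _).le, ← exp_mul]
    ring_nf
  refine ⟨⟨∫ x in (-1 : ℝ)..1, |x| ^ (-(1 / 4) : ℝ), fun y _ => ?_⟩, fun y _ => hf₀ y,
    fun N C => ?_⟩
  · simp_rw [hf']
    exact integral_norm_cpow_add_I_mul_le (by norm_num) (by norm_num) _ (by norm_num)
  · simpa only [hf₀] using exists_mul_rpow_neg_lt_exp_inv_sq N C
end

section
/- Let Z(x,y) = x + i·exp(-1/y) for (x,y) ∈ (-1,1) × (0,1) and f(x,y) = 1/Z(x,y). Then there is a constant C such that ∫_{-1}^{1} |f(x,y)| dx ≤ C/y for all y ∈ (0,1), while |f(0,y)| = exp(1/y). -/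
open Real

/-!
Since `‖x + iε‖ ≥ (|x| + ε) / 2`, the integral is at most
`2 ∫_{-1}^{1} dx / (|x| + ε) = 4 log ((1 + ε) / ε)`, and for `ε = exp (-1/y)` this logarithm is
`log (1 + ε) + 1/y ≤ 2/y`. At `x = 0`, `‖Z 0 y‖ = ε`.
-/

open Complex in
theorem norm_inv_ofReal_add_I_mul_le (x : ℝ) {ε : ℝ} (hε : 0 < ε) :
    ‖((x : ℂ) + I * ε)⁻¹‖ ≤ 2 / (|x| + ε) := by
  set z : ℂ := x + I * ε
  have hre : |x| ≤ ‖z‖ := by simpa [z] using abs_re_le_norm z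
  have him : ε ≤ ‖z‖ := by simpa [z, abs_of_pos hε] using abs_im_le_norm z
  rw [norm_inv, inv_eq_one_div, div_le_div_iff₀ (by linarith) (by positivity)]
  linarith

open Complex in
theorem continuous_ofReal_add_I_mul_inv {ε : ℝ} (hε : ε ≠ 0) :
    Continuous fun x : ℝ => ((x : ℂ) + I * ε)⁻¹ :=
  (continuous_ofReal.add continuous_const).inv₀ fun x h => hε <| by
    simpa using congrArg Complex.im h

theorem continuous_inv_abs_add {ε : ℝ} (hε : 0 < ε) : Continuous fun x : ℝ => (|x| + ε)⁻¹ :=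
  (continuous_abs.add continuous_const).inv₀ fun x =>
    (add_pos_of_nonneg_of_pos (abs_nonneg x) hε).ne'

theorem integral_inv_abs_add {a ε : ℝ} (ha : 0 ≤ a) (hε : 0 < ε) :
    ∫ x in -a..a, (|x| + ε)⁻¹ = 2 * log ((a + ε) / ε) := by
  have hint := continuous_inv_abs_add hε
  have hhalf : ∫ x in (0)..a, (|x| + ε)⁻¹ = log ((a + ε) / ε) := by
    rw [intervalIntegral.integral_congr (g := fun x => (x + ε)⁻¹) fun x hx => by
        rw [Set.uIcc_of_le ha] at hx; simp only [abs_of_nonneg hx.1],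
      intervalIntegral.integral_comp_add_right (fun x => x⁻¹), zero_add,
      integral_inv_of_pos hε (by linarith)]
  have hsymm : ∫ x in -a..0, (|x| + ε)⁻¹ = ∫ x in (0)..a, (|x| + ε)⁻¹ := by
    simpa using (intervalIntegral.integral_comp_neg (a := 0) (b := a)
      fun x => (|x| + ε)⁻¹).symm
  rw [← intervalIntegral.integral_add_adjacent_intervals (b := 0)
    (hint.intervalIntegrable _ _) (hint.intervalIntegrable _ _), hsymm, hhalf]
  ring

theorem log_div_exp_neg_inv_le {y : ℝ} (hy : y ∈ Set.Ioo (0 : ℝ) 1) :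
    log ((1 + exp (-(1 / y))) / exp (-(1 / y))) ≤ 2 / y := by
  obtain ⟨hy0, hy1⟩ := hy
  have hε1 : exp (-(1 / y)) ≤ 1 := exp_le_one_iff.2 (by simp [hy0.le])
  have hy1' : 1 ≤ 1 / y := by rw [le_div_iff₀ hy0]; linarith
  rw [log_div (by positivity) (exp_pos _).ne', log_exp]
  have := log_le_sub_one_of_pos (x := 1 + exp (-(1 / y))) (by positivity)
  rw [show (2 : ℝ) / y = 1 / y + 1 / y by ring]
  linarith

/-- For `Z(x,y) = x + i·exp(-1/y)` on `(-1,1) × (0,1)` and `f = 1/Z`,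
there is a constant `C` with `∫_{-1}^1 |f(x,y)| dx ≤ C/y` for all `y ∈ (0,1)`,
while `|f(0,y)| = exp(1/y)`. -/
theorem example_one_two
    (Z : ℝ → ℝ → ℂ) (hZ : ∀ x y, Z x y = (x : ℂ) + Complex.I * Real.exp (-(1/y)))
    (f : ℝ → ℝ → ℂ) (hf : ∀ x y, f x y = 1 / Z x y) :
    (∃ C : ℝ, ∀ y ∈ Set.Ioo (0:ℝ) 1, (∫ x in (-1:ℝ)..1, ‖f x y‖) ≤ C / y) ∧
    (∀ y ∈ Set.Ioo (0:ℝ) 1, ‖f 0 y‖ = Real.exp (1/y)) := by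
  have hfZ : ∀ x y, f x y = ((x : ℂ) + Complex.I * Real.exp (-(1/y)))⁻¹ := by
    intro x y; rw [hf, hZ, one_div]
  refine ⟨⟨8, fun y hy => ?_⟩, fun y _ => ?_⟩
  · set ε := exp (-(1 / y))
    have hε : 0 < ε := exp_pos _
    calc ∫ x in (-1:ℝ)..1, ‖f x y‖
        ≤ ∫ x in (-1:ℝ)..1, 2 * (|x| + ε)⁻¹ := by
          simp only [hfZ]
          refine intervalIntegral.integral_mono_on (by norm_num)
            ((continuous_ofReal_add_I_mul_inv hε.ne').norm.intervalIntegrable _ _) ?_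
            fun x _ => (norm_inv_ofReal_add_I_mul_le x hε).trans_eq (div_eq_mul_inv _ _)
          exact (continuous_const.mul (continuous_inv_abs_add hε)).intervalIntegrable _ _
      _ = 4 * log ((1 + ε) / ε) := by
          rw [intervalIntegral.integral_const_mul, integral_inv_abs_add zero_le_one hε]; ring
      _ ≤ 4 * (2 / y) := by gcongr; exact log_div_exp_neg_inv_le hy
      _ = 8 / y := by ring
  · rw [hfZ, Complex.ofReal_zero, zero_add, norm_inv, norm_mul, Complex.norm_I, one_mul,
      Complex.norm_real, norm_of_nonneg (exp_pos _).le, ← exp_neg, neg_neg]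
end
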